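/- arXiv:2507.04721 — 2 statements merged into one kernel-verified Lean document; each statement's English description precedes it below -/
import Mathlib

section
/- Let G = (V, E) be a connected proper interval graph with proper interval representation and edge interval ordering σ_E = (e_1, …, e_m). Let L ⊆ V and let i < m' be indices such that |N_G[e_i] ∩ L| = 2 and |N_G[e_{m'}] ∩ L| < 2, and set q = 2 − |N_G[e_{m'}] ∩ L|. Then for every edge e_j with j > m' and N_G[e_i] ∩ N_G[e_j] ≠ ∅, there is a vertex v ∈ T^q[N_G[e_{m'}] \ L] such that v ∈ N_G[e_i] ∪ N_G[e_j]; in fact every vertex of T^q[N_G[e_{m'}] \ L] lies in N_G[e_i] ∪ N_G[e_j]. -/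
/-!
In a proper interval representation, `x ∈ N[uv]` (with `r u < r v`) means `l x ≤ r v` and
`l u ≤ r x`. Write `e_i = ab`, `e_{m'} = cd`, `e_j = c'd'`. Since `q ≤ |{c, d} \ L|` and both
`c, d` end after `l a`, every vertex of `T^q[N[cd] \ L]` ends after `l a`. Such a vertex `x`
of `N[cd]` lies in `N[ab]` unless it starts after `r b`; then a common neighbour `w` of
`ab` and `c'd'` starts before `x`, so properness forces `r w < r x`, which puts `x` in
`N[c'd']`.
-/

open SimpleGraph

variable {V : Type*}

/-- closed neighbourhood `N_G[v]` -/
def cN (G : SimpleGraph V) (v : V) : Set V := insert v {u | G.Adj v u}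

/-- closed neighbourhood `N_G[e]` of an edge given as a `Sym2`. -/
def eN (G : SimpleGraph V) (e : Sym2 V) : Set V := {w | ∃ x ∈ e, w ∈ cN G x}

/-- closed neighbourhood `N_G[e]` of an edge given as an ordered pair `e = uv`. -/
def eNp (G : SimpleGraph V) (e : V × V) : Set V := cN G e.1 ∪ cN G e.2

/-- A liar's vertex-edge dominating set. -/
def IsLiarVE (G : SimpleGraph V) (L : Set V) : Prop :=
  (∀ e ∈ G.edgeSet, 2 ≤ (eN G e ∩ L).ncard) ∧
  (∀ e ∈ G.edgeSet, ∀ f ∈ G.edgeSet, e ≠ f → 3 ≤ ((eN G e ∪ eN G f) ∩ L).ncard)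

/-- A minimum liar's vertex-edge dominating set. -/
def IsMinLiar (G : SimpleGraph V) (L : Set V) : Prop :=
  IsLiarVE G L ∧ ∀ L' : Set V, IsLiarVE G L' → L.ncard ≤ L'.ncard

/-- A proper interval representation of a graph `G`: closed intervals `[l v, r v]`,
with all `2|V|` endpoints pairwise distinct, such that two distinct vertices are
adjacent iff their intervals intersect, and no interval contains another. -/
structure PIRep {V : Type*} (G : SimpleGraph V) where
  l : V → ℝ
  r : V → ℝ
  lr : ∀ v, l v < r v
  distinct : Function.Injective (Sum.elim l r : V ⊕ V → ℝ)
  adj_iff : ∀ u v : V, u ≠ v → (G.Adj u v ↔ (l u ≤ r v ∧ l v ≤ r u))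
  proper : ∀ u v : V, u ≠ v → ¬ (l u ≤ l v ∧ r v ≤ r u)

/-- The order `<_E` on edges, written as ordered pairs `e = uv` with `r u < r v`. -/
def ltE {G : SimpleGraph V} (ρ : PIRep G) (e f : V × V) : Prop :=
  ρ.r e.2 < ρ.r f.2 ∨ (e.2 = f.2 ∧ ρ.r e.1 < ρ.r f.1)

/-- An edge interval ordering `σ_E = (e_1, …, e_m)` of all edges of `G`,
increasing with respect to `<_E`; each edge `e_i = (u_i, v_i)` with `r u_i < r v_i`. -/
structure EdgeOrder {V : Type*} {G : SimpleGraph V} (ρ : PIRep G) where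
  m : ℕ
  seq : Fin m → V × V
  adj : ∀ i, G.Adj (seq i).1 (seq i).2
  ord : ∀ i, ρ.r (seq i).1 < ρ.r (seq i).2
  surj : ∀ u v : V, G.Adj u v → ρ.r u < ρ.r v → ∃ i, seq i = (u, v)
  mono : ∀ i j, i < j → ltE ρ (seq i) (seq j)

/-- `T^q[S]`: the `q` vertices of `S` whose intervals have the largest right
endpoints (all of `S` if `|S| ≤ q`). -/
def Tq {G : SimpleGraph V} (ρ : PIRep G) (q : ℕ) (S : Set V) : Set V :=
  {v | v ∈ S ∧ ({u | u ∈ S ∧ ρ.r v < ρ.r u}).ncard < q}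

variable {G : SimpleGraph V}

namespace PIRep

variable (ρ : PIRep G)

lemma l_injective : Function.Injective ρ.l := fun u v h => by
  simpa using ρ.distinct (a₁ := Sum.inl u) (a₂ := Sum.inl v) (by simpa using h)

lemma l_lt_l_of_r_lt_r {u v : V} (h : ρ.r u < ρ.r v) : ρ.l u < ρ.l v := by
  have huv : u ≠ v := fun e => h.ne (congrArg ρ.r e)
  rcases lt_trichotomy (ρ.l u) (ρ.l v) with h' | h' | h'
  · exact h'
  · exact absurd (ρ.l_injective h') huv
  · exact absurd ⟨h'.le, h.le⟩ (ρ.proper v u huv.symm)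

lemma mem_cN_iff (u x : V) : x ∈ cN G u ↔ ρ.l x ≤ ρ.r u ∧ ρ.l u ≤ ρ.r x := by
  rw [cN, Set.mem_insert_iff, Set.mem_ofPred_eq]
  constructor
  · rintro (rfl | h)
    · exact ⟨(ρ.lr _).le, (ρ.lr _).le⟩
    · exact ((ρ.adj_iff u x h.ne).mp h).symm
  · rintro ⟨h1, h2⟩
    by_cases hx : x = u
    · exact Or.inl hx
    · exact Or.inr ((ρ.adj_iff u x (Ne.symm hx)).mpr ⟨h2, h1⟩)

lemma mem_eNp_iff {e : V × V} (hadj : G.Adj e.1 e.2) (hr : ρ.r e.1 < ρ.r e.2) (x : V) :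
    x ∈ eNp G e ↔ ρ.l x ≤ ρ.r e.2 ∧ ρ.l e.1 ≤ ρ.r x := by
  have hll := ρ.l_lt_l_of_r_lt_r hr
  have hl₂ := ((ρ.adj_iff e.1 e.2 hadj.ne).mp hadj).2
  rw [eNp, Set.mem_union, ρ.mem_cN_iff, ρ.mem_cN_iff]
  constructor
  · rintro (⟨h1, h2⟩ | ⟨h1, h2⟩)
    · exact ⟨h1.trans hr.le, h2⟩
    · exact ⟨h1, hll.le.trans h2⟩
  · rintro ⟨h1, h2⟩
    by_cases hc : ρ.l x ≤ ρ.r e.1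
    · exact Or.inl ⟨hc, h2⟩
    · exact Or.inr ⟨h1, (hl₂.trans (not_le.mp hc).le).trans (ρ.lr x).le⟩

end PIRep

namespace EdgeOrder

variable {ρ : PIRep G} (σ : EdgeOrder ρ)

lemma mem_eNp_iff (k : Fin σ.m) (x : V) :
    x ∈ eNp G (σ.seq k) ↔ ρ.l x ≤ ρ.r (σ.seq k).2 ∧ ρ.l (σ.seq k).1 ≤ ρ.r x :=
  ρ.mem_eNp_iff (σ.adj k) (σ.ord k) x

lemma fst_mem_eNp (k : Fin σ.m) : (σ.seq k).1 ∈ eNp G (σ.seq k) :=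
  (σ.mem_eNp_iff k _).mpr ⟨((ρ.lr _).trans (σ.ord k)).le, (ρ.lr _).le⟩

lemma snd_mem_eNp (k : Fin σ.m) : (σ.seq k).2 ∈ eNp G (σ.seq k) :=
  (σ.mem_eNp_iff k _).mpr ⟨(ρ.lr _).le, ((ρ.lr _).trans (σ.ord k)).le⟩

lemma r_snd_le_r_snd {k j : Fin σ.m} (hkj : k ≤ j) :
    ρ.r (σ.seq k).2 ≤ ρ.r (σ.seq j).2 := by
  rcases hkj.lt_or_eq with hkj | rfl
  · rcases σ.mono k j hkj with h | ⟨h, _⟩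
    · exact h.le
    · exact (congrArg ρ.r h).le
  · exact le_rfl

lemma l_fst_lt_r_fst {i k : Fin σ.m} (hik : i ≤ k) :
    ρ.l (σ.seq i).1 < ρ.r (σ.seq k).1 := by
  rcases hik.lt_or_eq with hik | rfl
  · rcases σ.mono i k hik with h | ⟨-, h⟩
    · have hl_i := ρ.l_lt_l_of_r_lt_r (σ.ord i)
      have hl_ik := ρ.l_lt_l_of_r_lt_r h
      have hl_k := ((ρ.adj_iff _ _ (σ.adj k).ne).mp (σ.adj k)).2
      linarith
    · exact (ρ.l_lt_l_of_r_lt_r h).trans (ρ.lr _)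
  · exact ρ.lr _

lemma mem_eNp_union_of_l_fst_le_r {i k j : Fin σ.m} (hkj : k ≤ j) {w : V}
    (hwi : w ∈ eNp G (σ.seq i)) (hwj : w ∈ eNp G (σ.seq j)) {x : V}
    (hxk : x ∈ eNp G (σ.seq k)) (hx : ρ.l (σ.seq i).1 ≤ ρ.r x) :
    x ∈ eNp G (σ.seq i) ∪ eNp G (σ.seq j) := by
  obtain ⟨hlw, -⟩ := (σ.mem_eNp_iff i w).mp hwi
  obtain ⟨-, hrw⟩ := (σ.mem_eNp_iff j w).mp hwj
  obtain ⟨hlx, -⟩ := (σ.mem_eNp_iff k x).mp hxk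
  by_cases hxi : ρ.l x ≤ ρ.r (σ.seq i).2
  · exact Or.inl ((σ.mem_eNp_iff i x).mpr ⟨hxi, hx⟩)
  refine Or.inr ((σ.mem_eNp_iff j x).mpr ⟨hlx.trans (σ.r_snd_le_r_snd hkj), ?_⟩)
  have hwx : ρ.l w < ρ.l x := hlw.trans_lt (not_le.mp hxi)
  by_contra! hxj
  exact ρ.proper w x (fun h => hwx.ne (congrArg ρ.l h)) ⟨hwx.le, hxj.le.trans hrw⟩

end EdgeOrder

section Tq

variable [Finite V] (ρ : PIRep G)

lemma exists_r_le_of_mem_Tq {q : ℕ} {S P : Set V} {v : V} (hv : v ∈ Tq ρ q S) (hPS : P ⊆ S)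
    (hqP : q ≤ P.ncard) : ∃ u ∈ P, ρ.r u ≤ ρ.r v := by
  by_contra! hP
  have hsub : P ⊆ {u | u ∈ S ∧ ρ.r v < ρ.r u} := fun u hu => ⟨hPS hu, hP u hu⟩
  have := Set.ncard_le_ncard hsub (Set.toFinite _)
  exact absurd hv.2 (by omega)

lemma Tq_nonempty {q : ℕ} (hq : 0 < q) {S : Set V} (hS : S.Nonempty) :
    (Tq ρ q S).Nonempty := by
  obtain ⟨x, hxS, hxmax⟩ := (Set.toFinite S).exists_maximalFor ρ.r _ hS
  have hnone : {u | u ∈ S ∧ ρ.r x < ρ.r u} = ∅ :=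
    Set.eq_empty_of_forall_notMem fun u ⟨hu, hxu⟩ => hxu.not_ge (hxmax hu hxu.le)
  exact ⟨x, hxS, by rw [hnone, Set.ncard_empty]; exact hq⟩

end Tq

lemma two_sub_ncard_inter_le_ncard_pair_diff [Finite V] {c d : V} (hcd : c ≠ d) {M : Set V}
    (hc : c ∈ M) (hd : d ∈ M) (L : Set V) :
    2 - (M ∩ L).ncard ≤ ({c, d} \ L : Set V).ncard := by
  have hpair : ({c, d} : Set V) ⊆ M := Set.insert_subset hc (Set.singleton_subset_iff.mpr hd)
  have hPL := Set.ncard_le_ncard (Set.inter_subset_inter_left L hpair) (Set.toFinite _)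
  rw [← Set.sdiff_self_inter, Set.ncard_sdiff Set.inter_subset_left, Set.ncard_pair hcd]
  omega

theorem stmt_14_general
    {V : Type*} [Fintype V]
    (G : SimpleGraph V) (ρ : PIRep G) (σ : EdgeOrder ρ)
    (L : Set V) (i mi : Fin σ.m) (him : i < mi)
    (hlt : (eNp G (σ.seq mi) ∩ L).ncard < 2)
    (q : ℕ) (hq : q = 2 - (eNp G (σ.seq mi) ∩ L).ncard) :
    ∀ j : Fin σ.m, mi < j → (eNp G (σ.seq i) ∩ eNp G (σ.seq j)).Nonempty →
      (∃ v ∈ Tq ρ q (eNp G (σ.seq mi) \ L), v ∈ eNp G (σ.seq i) ∪ eNp G (σ.seq j)) ∧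
      (∀ v ∈ Tq ρ q (eNp G (σ.seq mi) \ L), v ∈ eNp G (σ.seq i) ∪ eNp G (σ.seq j)) := by
  intro j hmij ⟨w, hwi, hwj⟩
  set P : Set V := {(σ.seq mi).1, (σ.seq mi).2} \ L
  have hPS : P ⊆ eNp G (σ.seq mi) \ L := Set.sdiff_subset_sdiff_left <|
    Set.insert_subset (σ.fst_mem_eNp mi) (Set.singleton_subset_iff.mpr (σ.snd_mem_eNp mi))
  have hqP : q ≤ P.ncard := hq ▸ two_sub_ncard_inter_le_ncard_pair_diff (σ.adj mi).ne
    (σ.fst_mem_eNp mi) (σ.snd_mem_eNp mi) L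
  have hT : ∀ v ∈ Tq ρ q (eNp G (σ.seq mi) \ L), v ∈ eNp G (σ.seq i) ∪ eNp G (σ.seq j) := by
    intro v hv
    obtain ⟨u, ⟨hu, -⟩, huv⟩ := exists_r_le_of_mem_Tq ρ hv hPS hqP
    have hlu : ρ.l (σ.seq i).1 < ρ.r u := by
      rcases hu with rfl | rfl
      · exact σ.l_fst_lt_r_fst him.le
      · exact (σ.l_fst_lt_r_fst him.le).trans (σ.ord mi)
    exact σ.mem_eNp_union_of_l_fst_le_r hmij.le hwi hwj hv.1.1 (hlu.le.trans huv)
  have hq0 : 0 < q := by omega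
  obtain ⟨v, hv⟩ := Tq_nonempty ρ hq0 ((Set.nonempty_of_ncard_ne_zero (by omega)).mono hPS)
  exact ⟨⟨v, hv, hT v hv⟩, hT⟩

theorem stmt_14
    {V : Type*} [Fintype V]
    (G : SimpleGraph V) (hconn : G.Connected) (ρ : PIRep G) (σ : EdgeOrder ρ)
    (L : Set V) (i mi : Fin σ.m) (him : i < mi)
    (h2 : (eNp G (σ.seq i) ∩ L).ncard = 2)
    (hlt : (eNp G (σ.seq mi) ∩ L).ncard < 2)
    (q : ℕ) (hq : q = 2 - (eNp G (σ.seq mi) ∩ L).ncard) :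
    ∀ j : Fin σ.m, mi < j → (eNp G (σ.seq i) ∩ eNp G (σ.seq j)).Nonempty →
      (∃ v ∈ Tq ρ q (eNp G (σ.seq mi) \ L), v ∈ eNp G (σ.seq i) ∪ eNp G (σ.seq j)) ∧
      (∀ v ∈ Tq ρ q (eNp G (σ.seq mi) \ L), v ∈ eNp G (σ.seq i) ∪ eNp G (σ.seq j)) :=
  stmt_14_general G ρ σ L i mi him hlt q hq
end

section
/- Let G = (V, E) be a connected proper interval graph with proper interval representation and edge interval ordering σ_E = (e_1, …, e_m). Let L ⊆ V and let i < m' be indices such that |N_G[e_i] ∩ L| = 2 and N_G[e_{m'}] ∩ L = N_G[e_i] ∩ L. Then for every edge e_j with j > m' and N_G[e_i] ∩ N_G[e_j] ≠ ∅, there is a vertex v ∈ T^1[N_G[e_{m'}] \ L] such that v ∈ N_G[e_i] ∪ N_G[e_j]. -/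
open SimpleGraph

variable {V : Type*}

section AuxLemmas

lemma lmono {G : SimpleGraph V} (ρ : PIRep G) {a b : V} (h : ρ.r a < ρ.r b) :
    ρ.l a < ρ.l b := by
  by_contra hc
  push_neg at hc
  rcases eq_or_lt_of_le hc with he | hl
  · have : b = a := Sum.inl.inj (ρ.distinct
      (show Sum.elim ρ.l ρ.r (Sum.inl b) = Sum.elim ρ.l ρ.r (Sum.inl a) from he))
    subst this; exact lt_irrefl _ h
  · exact ρ.proper b a (fun hba => by subst hba; exact lt_irrefl _ h) ⟨hl.le, h.le⟩

lemma mem_eNp_iff {G : SimpleGraph V} (ρ : PIRep G) {e : V × V}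
    (h : G.Adj e.1 e.2) (hr : ρ.r e.1 < ρ.r e.2) (w : V) :
    w ∈ eNp G e ↔ (ρ.l w ≤ ρ.r e.2 ∧ ρ.l e.1 ≤ ρ.r w) := by
  have hadj := (ρ.adj_iff e.1 e.2 h.ne).mp h
  constructor
  · rintro (hw | hw)
    · rcases hw with rfl | hw
      · exact ⟨(ρ.lr _).le.trans hr.le, (ρ.lr _).le⟩
      · have := (ρ.adj_iff e.1 w (Adj.ne hw)).mp hw
        exact ⟨this.2.trans hr.le, this.1⟩
    · rcases hw with rfl | hw
      · exact ⟨(ρ.lr _).le, (ρ.lr _).le.trans hr.le⟩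
      · have := (ρ.adj_iff e.2 w (Adj.ne hw)).mp hw
        exact ⟨this.2, (lmono ρ hr).le.trans this.1⟩
  · rintro ⟨h1, h2⟩
    by_cases hwv : w = e.2
    · exact Or.inr (by rw [hwv]; exact Set.mem_insert _ _)
    by_cases hwu : w = e.1
    · exact Or.inl (by rw [hwu]; exact Set.mem_insert _ _)
    by_cases hlv : ρ.l e.2 ≤ ρ.r w
    · exact Or.inr (Set.mem_insert_iff.mpr (Or.inr
        ((ρ.adj_iff e.2 w (fun hx => hwv hx.symm)).mpr ⟨hlv, h1⟩)))
    · push_neg at hlv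
      exact Or.inl (Set.mem_insert_iff.mpr (Or.inr
        ((ρ.adj_iff e.1 w (fun hx => hwu hx.symm)).mpr
          ⟨h2, ((ρ.lr w).le.trans hlv.le).trans hadj.2⟩)))

lemma fst_mem_eNp (G : SimpleGraph V) (e : V × V) : e.1 ∈ eNp G e :=
  Or.inl (Set.mem_insert _ _)

lemma snd_mem_eNp (G : SimpleGraph V) (e : V × V) : e.2 ∈ eNp G e :=
  Or.inr (Set.mem_insert _ _)

lemma walk_closed {G : SimpleGraph V} {S : Set V}
    (hS : ∀ x ∈ S, ∀ y, G.Adj x y → y ∈ S) {a b : V} (p : G.Walk a b) (ha : a ∈ S) :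
    b ∈ S := by
  induction p with
  | nil => exact ha
  | cons h _ ih => exact ih (hS _ ha _ h)

end AuxLemmas

theorem stmt_15
    {V : Type*} [Fintype V]
    (G : SimpleGraph V) (hconn : G.Connected) (ρ : PIRep G) (σ : EdgeOrder ρ)
    (L : Set V) (i mi : Fin σ.m) (him : i < mi)
    (h2 : (eNp G (σ.seq i) ∩ L).ncard = 2)
    (heq : eNp G (σ.seq mi) ∩ L = eNp G (σ.seq i) ∩ L) :
    ∀ j : Fin σ.m, mi < j → (eNp G (σ.seq i) ∩ eNp G (σ.seq j)).Nonempty →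
      ∃ v ∈ Tq ρ 1 (eNp G (σ.seq mi) \ L), v ∈ eNp G (σ.seq i) ∪ eNp G (σ.seq j) := by
  classical
  intro j hmij hne
  obtain ⟨w, hwi, hwj⟩ := hne
  -- basic data about the three edges
  have adji := σ.adj i
  have adjmi := σ.adj mi
  have adjj := σ.adj j
  have ordi := σ.ord i
  have ordmi := σ.ord mi
  have ordj := σ.ord j
  have memi := mem_eNp_iff ρ adji ordi
  have memmi := mem_eNp_iff ρ adjmi ordmi
  have memj := mem_eNp_iff ρ adjj ordj
  have monoim := σ.mono i mi him
  have monomij := σ.mono mi j hmij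
  have hrimi : ρ.r (σ.seq i).2 ≤ ρ.r (σ.seq mi).2 := by
    rcases monoim with h | ⟨h, _⟩
    · exact h.le
    · exact le_of_eq (by rw [h])
  have hrmij : ρ.r (σ.seq mi).2 ≤ ρ.r (σ.seq j).2 := by
    rcases monomij with h | ⟨h, _⟩
    · exact h.le
    · exact le_of_eq (by rw [h])
  set S : Set V := eNp G (σ.seq mi) \ L with hSdef
  -- S is nonempty
  have hSne : S.Nonempty := by
    by_contra hS
    rw [Set.not_nonempty_iff_eq_empty, Set.diff_eq_empty] at hS
    have hcard : (eNp G (σ.seq mi)).ncard = 2 := by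
      rw [← Set.inter_eq_left.mpr hS, heq]; exact h2
    have hpairsub : ({(σ.seq mi).1, (σ.seq mi).2} : Set V) ⊆ eNp G (σ.seq mi) := by
      rintro x (rfl | rfl)
      · exact fst_mem_eNp G _
      · exact snd_mem_eNp G _
    have hpeq : ({(σ.seq mi).1, (σ.seq mi).2} : Set V) = eNp G (σ.seq mi) :=
      Set.eq_of_subset_of_ncard_le hpairsub
        (by rw [hcard, Set.ncard_pair adjmi.ne]) (Set.toFinite _)
    have hclosed : ∀ x ∈ ({(σ.seq mi).1, (σ.seq mi).2} : Set V), ∀ y, G.Adj x y →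
        y ∈ ({(σ.seq mi).1, (σ.seq mi).2} : Set V) := by
      rintro x (rfl | rfl) y hy
      · rw [hpeq]; exact Or.inl (Set.mem_insert_iff.mpr (Or.inr hy))
      · rw [hpeq]; exact Or.inr (Set.mem_insert_iff.mpr (Or.inr hy))
    obtain ⟨p⟩ := hconn.preconnected (σ.seq mi).2 (σ.seq j).2
    have hvj := walk_closed hclosed p (Or.inr rfl)
    rcases hvj with hvj | hvj
    · rcases monomij with h | ⟨h, _⟩
      · rw [hvj] at h; exact absurd ordmi (not_lt.mpr h.le)
      · rw [hvj] at h; exact absurd h.symm adjmi.ne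
    · rcases monomij with h | ⟨h, hu⟩
      · rw [hvj] at h; exact lt_irrefl _ h
      · have huj : (σ.seq j).1 ∈ ({(σ.seq mi).1, (σ.seq mi).2} : Set V) := by
          rw [hpeq]
          exact Or.inr (Set.mem_insert_iff.mpr (Or.inr (by rw [hvj] at adjj; exact adjj.symm)))
        rcases huj with huj | huj
        · rw [huj] at hu; exact lt_irrefl _ hu
        · rw [huj, ← hvj] at adjj; exact adjj.ne rfl
  -- pick the maximum of S
  obtain ⟨v, hvS, hmax⟩ := Set.exists_max_image S ρ.r (Set.toFinite _) hSne
  refine ⟨v, ⟨hvS, ?_⟩, ?_⟩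
  · have hempty : {u | u ∈ S ∧ ρ.r v < ρ.r u} = (∅ : Set V) := by
      ext u
      simp only [Set.mem_setOf_eq, Set.mem_empty_iff_false, iff_false, not_and, not_lt]
      exact fun hu => hmax u hu
    rw [hempty, Set.ncard_empty]
    exact one_pos
  -- main claim: v ∈ N[e_i] ∪ N[e_j]
  by_contra hvc
  rw [Set.mem_union, not_or] at hvc
  obtain ⟨hvi, hvj⟩ := hvc
  have hvmem := (memmi v).mp hvS.1
  obtain ⟨hlv_rvmi, hlumi_rv⟩ := hvmem
  -- v ∉ N[e_j] forces r v < l u_j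
  have hrv_luj : ρ.r v < ρ.l (σ.seq j).1 := by
    by_contra hcon
    push_neg at hcon
    exact hvj ((memj v).mpr ⟨hlv_rvmi.trans hrmij, hcon⟩)
  -- case split on why v ∉ N[e_i]
  have hnoti : ¬ (ρ.l v ≤ ρ.r (σ.seq i).2 ∧ ρ.l (σ.seq i).1 ≤ ρ.r v) :=
    fun hcon => hvi ((memi v).mpr hcon)
  by_cases hA : ρ.r (σ.seq i).2 < ρ.l v
  · -- branch (a): w's interval strictly contains v's interval
    obtain ⟨hwl, hwr⟩ := (memi w).mp hwi
    obtain ⟨hwl', hwr'⟩ := (memj w).mp hwj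
    have hwne : w ≠ v := by
      intro hwv; rw [hwv] at hwl; exact absurd hA (not_lt.mpr hwl)
    exact ρ.proper w v hwne ⟨(hwl.trans_lt hA).le, (hrv_luj.trans_le hwr').le⟩
  · push_neg at hA
    have hrv_lui : ρ.r v < ρ.l (σ.seq i).1 := by
      by_contra hcon
      push_neg at hcon
      exact hnoti ⟨hA, hcon⟩
    by_cases hvmiL : (σ.seq mi).2 ∈ L
    · -- v_mi ∈ L, hence v_mi ∈ N[e_i]
      have hvmi_i : (σ.seq mi).2 ∈ eNp G (σ.seq i) := by
        have : (σ.seq mi).2 ∈ eNp G (σ.seq mi) ∩ L := ⟨snd_mem_eNp G _, hvmiL⟩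
        rw [heq] at this
        exact this.1
      obtain ⟨hvmi1, hvmi2⟩ := (memi _).mp hvmi_i
      have hadjmi := (ρ.adj_iff (σ.seq mi).1 (σ.seq mi).2 adjmi.ne).mp adjmi
      by_cases humiL : (σ.seq mi).1 ∈ L
      · -- both endpoints in L: N[e_mi] ∩ L = {u_mi, v_mi}
        have hpairsub : ({(σ.seq mi).1, (σ.seq mi).2} : Set V) ⊆ eNp G (σ.seq mi) ∩ L := by
          rintro x (rfl | rfl)
          · exact ⟨fst_mem_eNp G _, humiL⟩
          · exact ⟨snd_mem_eNp G _, hvmiL⟩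
        have hpeq : ({(σ.seq mi).1, (σ.seq mi).2} : Set V) = eNp G (σ.seq mi) ∩ L :=
          Set.eq_of_subset_of_ncard_le hpairsub
            (by rw [heq, h2, Set.ncard_pair adjmi.ne]) (Set.toFinite _)
        have humi_i : (σ.seq mi).1 ∈ eNp G (σ.seq i) := by
          have : (σ.seq mi).1 ∈ eNp G (σ.seq mi) ∩ L := ⟨fst_mem_eNp G _, humiL⟩
          rw [heq] at this
          exact this.1
        obtain ⟨humi1, humi2⟩ := (memi _).mp humi_i
        have hui_mi : (σ.seq i).1 ∈ eNp G (σ.seq mi) := by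
          refine (memmi _).mpr ⟨humi2.trans ordmi.le, ?_⟩
          exact (hlumi_rv.trans hrv_lui.le).trans (ρ.lr _).le
        have hui_notL : (σ.seq i).1 ∉ L := by
          intro hL
          have : (σ.seq i).1 ∈ ({(σ.seq mi).1, (σ.seq mi).2} : Set V) := by
            rw [hpeq]; exact ⟨hui_mi, hL⟩
          rcases this with h | h
          · have : ρ.l (σ.seq mi).1 = ρ.l (σ.seq i).1 := by rw [h]
            exact absurd (hlumi_rv.trans_lt hrv_lui) (not_lt.mpr this.ge)
          · rcases monoim with hm | ⟨hm, _⟩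
            · rw [← h] at hm; exact absurd (ordi.trans hm) (lt_irrefl _)
            · rw [hm] at ordi; rw [← h] at ordi; exact lt_irrefl _ ordi
        have : ρ.r (σ.seq i).1 ≤ ρ.r v := hmax _ ⟨hui_mi, hui_notL⟩
        exact absurd ((this.trans_lt hrv_lui).trans (ρ.lr _)) (lt_irrefl _)
      · -- u_mi ∉ L, so r u_mi ≤ r v
        have humiS : (σ.seq mi).1 ∈ S := ⟨fst_mem_eNp G _, humiL⟩
        have hrumi_rv : ρ.r (σ.seq mi).1 ≤ ρ.r v := hmax _ humiS
        rcases monoim with hm | ⟨hm, hu⟩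
        · have hne' : (σ.seq mi).2 ≠ (σ.seq i).1 := by
            intro hx
            have : ρ.r (σ.seq i).1 < ρ.r (σ.seq mi).2 := ordi.trans hm
            rw [hx] at this; exact lt_irrefl _ this
          exact ρ.proper (σ.seq mi).2 (σ.seq i).1 hne'
            ⟨((hadjmi.2.trans hrumi_rv).trans_lt hrv_lui).le, (ordi.trans hm).le⟩
        · have : ρ.r (σ.seq i).1 < ρ.r (σ.seq i).1 :=
            (hu.trans_le hrumi_rv).trans (hrv_lui.trans (ρ.lr _))
          exact lt_irrefl _ this
    · -- v_mi ∉ L, so r v_mi ≤ r v, contradiction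
      have hvmiS : (σ.seq mi).2 ∈ S := ⟨snd_mem_eNp G _, hvmiL⟩
      have : ρ.r (σ.seq mi).2 ≤ ρ.r v := hmax _ hvmiS
      have : ρ.r (σ.seq i).2 < ρ.r (σ.seq i).2 :=
        ((hrimi.trans this).trans_lt hrv_lui).trans ((ρ.lr _).trans ordi)
      exact lt_irrefl _ this
end
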